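/- The translation of PUNQ types into DLAL types is invariant under subtyping: for all PUNQ types A, B, if A ≤ B then A⋆ = B⋆. -/

import Mathlib

open scoped Classical

namespace PUNQFormal

/-! ### PUNQ syntax (Figure 1) -/

mutual
inductive Term : Type
  | var : ℕ → Term
  | ket0 : Term
  | ket1 : Term
  | cond : Term → Sup → Sup → Term
  | lam : ℕ → Sup → Term
  | app : Term → Term → Term
  | pair : Term → Term → Term
  | lett : ℕ → ℕ → Term → Sup → Term
inductive Sup : Type
  | term : Term → Sup
  | zero : Sup
  | smul : ℂ → Sup → Sup
  | add : Sup → Sup → Sup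
end

/-- Basis values. -/
inductive BasisValue : Term → Prop
  | ket0 : BasisValue .ket0
  | ket1 : BasisValue .ket1
  | lam (x : ℕ) (b : Sup) : BasisValue (.lam x b)
  | pair {v w : Term} : BasisValue v → BasisValue w → BasisValue (.pair v w)

/-- Values: superpositions of basis values. -/
inductive Value : Sup → Prop
  | basis {v : Term} : BasisValue v → Value (.term v)
  | zero : Value .zero
  | smul (α : ℂ) {s : Sup} : Value s → Value (.smul α s)
  | add {s t : Sup} : Value s → Value t → Value (.add s t)

mutual
def fvT : Term → Finset ℕ
  | .var x => {x}
  | .ket0 => ∅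
  | .ket1 => ∅
  | .cond t s r => fvT t ∪ fvS s ∪ fvS r
  | .lam x b => fvS b \ {x}
  | .app t s => fvT t ∪ fvT s
  | .pair t s => fvT t ∪ fvT s
  | .lett x y t b => fvT t ∪ (fvS b \ {x, y})
def fvS : Sup → Finset ℕ
  | .term t => fvT t
  | .zero => ∅
  | .smul _ s => fvS s
  | .add s t => fvS s ∪ fvS t
end

/-! ### Syntactic sugar (Figure 2): distributing constructs over superpositions -/

def iteS : Sup → Sup → Sup → Sup
  | .term t, s, r => .term (.cond t s r)
  | .zero, _, _ => .zero
  | .smul α c, s, r => .smul α (iteS c s r)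
  | .add c d, s, r => .add (iteS c s r) (iteS d s r)

def appSR (t : Term) : Sup → Sup
  | .term r => .term (.app t r)
  | .zero => .zero
  | .smul α s => .smul α (appSR t s)
  | .add s r => .add (appSR t s) (appSR t r)

def appS : Sup → Sup → Sup
  | .term t, u => appSR t u
  | .zero, _ => .zero
  | .smul α s, u => .smul α (appS s u)
  | .add s r, u => .add (appS s u) (appS r u)

def pairSR (t : Term) : Sup → Sup
  | .term r => .term (.pair t r)
  | .zero => .zero
  | .smul α s => .smul α (pairSR t s)
  | .add s r => .add (pairSR t s) (pairSR t r)

def pairS : Sup → Sup → Sup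
  | .term t, u => pairSR t u
  | .zero, _ => .zero
  | .smul α s, u => .smul α (pairS s u)
  | .add s r, u => .add (pairS s u) (pairS r u)

def letS (x y : ℕ) : Sup → Sup → Sup
  | .term t, b => .term (.lett x y t b)
  | .zero, _ => .zero
  | .smul α c, b => .smul α (letS x y c b)
  | .add c d, b => .add (letS x y c b) (letS x y d b)

/-! ### Substitution -/

mutual
/-- Substitution of a superposition for a variable in a term,
distributing over superpositions via the syntactic sugar. -/
def substT : Term → ℕ → Sup → Sup
  | .var y, x, u => if y = x then u else .term (.var y)
  | .ket0, _, _ => .term .ket0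
  | .ket1, _, _ => .term .ket1
  | .cond t s r, x, u => iteS (substT t x u) (substS s x u) (substS r x u)
  | .lam y b, x, u => if y = x then .term (.lam y b) else .term (.lam y (substS b x u))
  | .app t s, x, u => appS (substT t x u) (substT s x u)
  | .pair t s, x, u => pairS (substT t x u) (substT s x u)
  | .lett y z t b, x, u =>
      letS y z (substT t x u) (if x = y ∨ x = z then b else substS b x u)
def substS : Sup → ℕ → Sup → Sup
  | .term t, x, u => substT t x u
  | .zero, _, _ => .zero
  | .smul α s, x, u => .smul α (substS s x u)
  | .add s r, x, u => .add (substS s x u) (substS r x u)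
end

mutual
/-- Simultaneous substitution of terms for variables. -/
def msubT : Term → (ℕ → Option Term) → Term
  | .var y, σ => (σ y).getD (.var y)
  | .ket0, _ => .ket0
  | .ket1, _ => .ket1
  | .cond t s r, σ => .cond (msubT t σ) (msubS s σ) (msubS r σ)
  | .lam y b, σ => .lam y (msubS b fun z => if z = y then none else σ z)
  | .app t s, σ => .app (msubT t σ) (msubT s σ)
  | .pair t s, σ => .pair (msubT t σ) (msubT s σ)
  | .lett y z t b, σ =>
      .lett y z (msubT t σ) (msubS b fun w => if w = y ∨ w = z then none else σ w)
def msubS : Sup → (ℕ → Option Term) → Sup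
  | .term t, σ => .term (msubT t σ)
  | .zero, _ => .zero
  | .smul α s, σ => .smul α (msubS s σ)
  | .add s r, σ => .add (msubS s σ) (msubS r σ)
end

/-- Renaming `t[x/y]`: replace the free variable `y` by `x`. -/
def rename (t : Sup) (y x : ℕ) : Sup :=
  msubS t fun z => if z = y then some (.var x) else none

/-! ### The vector-space equivalence ≡ -/

inductive SupEq : Sup → Sup → Prop
  | addComm (s t : Sup) : SupEq (.add s t) (.add t s)
  | addAssoc (s t r : Sup) : SupEq (.add (.add s t) r) (.add s (.add t r))
  | zeroAdd (t : Sup) : SupEq (.add .zero t) t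
  | zeroSmul (t : Sup) : SupEq (.smul 0 t) .zero
  | oneSmul (t : Sup) : SupEq (.smul 1 t) t
  | smulSmul (α β : ℂ) (t : Sup) : SupEq (.smul α (.smul β t)) (.smul (α * β) t)
  | smulAddSame (α β : ℂ) (t : Sup) :
      SupEq (.add (.smul α t) (.smul β t)) (.smul (α + β) t)
  | smulDist (α : ℂ) (s t : Sup) :
      SupEq (.smul α (.add s t)) (.add (.smul α s) (.smul α t))
  | refl (t : Sup) : SupEq t t
  | symm {s t : Sup} : SupEq s t → SupEq t s
  | trans {s t r : Sup} : SupEq s t → SupEq t r → SupEq s r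
  | smulCongr (α : ℂ) {s t : Sup} : SupEq s t → SupEq (.smul α s) (.smul α t)
  | addCongr {s t s' t' : Sup} : SupEq s t → SupEq s' t' → SupEq (.add s s') (.add t t')

/-! ### Canonical forms -/

def mkSum : List (ℂ × Term) → Sup
  | [] => .zero
  | [p] => .smul p.1 (.term p.2)
  | p :: l => .add (.smul p.1 (.term p.2)) (mkSum l)

def mkSumS : List (ℂ × Sup) → Sup
  | [] => .zero
  | [p] => .smul p.1 p.2
  | p :: l => .add (.smul p.1 p.2) (mkSumS l)

/-- Canonical form: pairwise distinct terms, all coefficients nonzero. -/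
def CForm (l : List (ℂ × Term)) : Prop :=
  (l.map Prod.snd).Nodup ∧ ∀ p ∈ l, p.1 ≠ 0

/-! ### Operational semantics (Figure 3) -/

inductive Step : Sup → Sup → Prop
  | if0 {s t : Sup} : Step (.term (.cond .ket0 s t)) s
  | if1 {s t : Sup} : Step (.term (.cond .ket1 s t)) t
  | abs {x : ℕ} {b : Sup} {v : Term} :
      BasisValue v → Step (.term (.app (.lam x b) v)) (substS b x (.term v))
  | lett {x y : ℕ} {v w : Term} {b : Sup} :
      BasisValue v → BasisValue w →
      Step (.term (.lett x y (.pair v w) b)) (substS (substS b x (.term v)) y (.term w))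
  | condCong {t : Term} {s r₁ r₂ : Sup} :
      Step (.term t) s → Step (.term (.cond t r₁ r₂)) (iteS s r₁ r₂)
  | appR {r t : Term} {s : Sup} :
      Step (.term t) s → Step (.term (.app r t)) (appSR r s)
  | appL {t v : Term} {s : Sup} :
      BasisValue v → Step (.term t) s → Step (.term (.app t v)) (appS s (.term v))
  | pairL {t r : Term} {s : Sup} :
      Step (.term t) s → Step (.term (.pair t r)) (pairS s (.term r))
  | pairR {v t : Term} {s : Sup} :
      BasisValue v → Step (.term t) s → Step (.term (.pair v t)) (pairS (.term v) s)
  | letCong {x y : ℕ} {t : Term} {s r : Sup} :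
      Step (.term t) s → Step (.term (.lett x y t r)) (letS x y s r)
  | sup (l w : List (ℂ × Term)) (f : ℕ → Sup) :
      l ≠ [] →
      CForm (l ++ w) →
      (∀ i : Fin l.length, Step (.term (l.get i).2) (f i.val)) →
      (∀ p ∈ w, BasisValue p.2) →
      Step (mkSum (l ++ w))
        (Sup.add (mkSumS ((List.range l.length).map fun i => ((l.getD i (0, Term.ket0)).1, f i)))
          (mkSum w))
  | equ {t t₁ s₁ s : Sup} : SupEq t t₁ → Step t₁ s₁ → SupEq s₁ s → Step t s

/-- Reflexive-transitive closure of the small-step relation. -/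
def StepStar : Sup → Sup → Prop := Relation.ReflTransGen Step

inductive StepN : ℕ → Sup → Sup → Prop
  | zero (t : Sup) : StepN 0 t t
  | succ {n : ℕ} {t s r : Sup} : Step t s → StepN n s r → StepN (n + 1) t r

/-! ### Inner product and orthogonality -/

noncomputable def coeff (v : Term) : Sup → ℂ
  | .term w => if v = w then 1 else 0
  | .zero => 0
  | .smul α s => α * coeff v s
  | .add s t => coeff v s + coeff v t

/-- Inner product on (raw syntactic) values. -/
noncomputable def inn : Sup → Sup → ℂ
  | .term v, w => coeff v w
  | .zero, _ => 0
  | .smul α s, w => (starRingEnd ℂ) α * inn s w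
  | .add s t, w => inn s w + inn t w

/-- Orthogonality of closed superpositions. -/
def Ortho (t s : Sup) : Prop :=
  ∃ v w : Sup, Value v ∧ Value w ∧ StepStar t v ∧ StepStar s w ∧ inn v w = 0

/-- Orthogonality of open superpositions: orthogonality under every substitution of
the variables of the domain `D` by closed basis values. -/
def OrthoOpen (D : Set ℕ) (s₁ s₂ : Sup) : Prop :=
  ∀ σ : ℕ → Option Term,
    (∀ x ∈ D, ∃ v, σ x = some v ∧ BasisValue v ∧ fvT v = ∅) →
    (∀ x ∉ D, σ x = none) →
    Ortho (msubS s₁ σ) (msubS s₂ σ)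

/-! ### Sizes -/

mutual
def sizeT : Term → ℕ
  | .var _ => 1
  | .ket0 => 1
  | .ket1 => 1
  | .cond t s r => 1 + sizeT t + max (sizeS s) (sizeS r)
  | .lam _ b => 1 + sizeS b
  | .app t s => 1 + sizeT t + sizeT s
  | .pair t s => 1 + sizeT t + sizeT s
  | .lett _ _ t b => 1 + sizeT t + sizeS b
def sizeS : Sup → ℕ
  | .term t => sizeT t
  | .zero => 0
  | .smul _ s => sizeS s
  | .add s t => max (sizeS s) (sizeS t)
end

/-! ### Types (Section 3.1) -/

inductive Ty : Type
  | tvar : ℕ → Ty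
  | lolli : Ty → Ty → Ty
  | arrow : Ty → Ty → Ty
  | prod : Ty → Ty → Ty
  | bit : Ty
  | sharp : Ty → Ty
  | sect : Ty → Ty
  | all : ℕ → Ty → Ty
deriving DecidableEq

/-- Ground types `Q := 𝔹 | ♯Q | §Q | Q×Q`. -/
inductive IsGround : Ty → Prop
  | bit : IsGround .bit
  | sharp {Q} : IsGround Q → IsGround (.sharp Q)
  | sect {Q} : IsGround Q → IsGround (.sect Q)
  | prod {Q R} : IsGround Q → IsGround R → IsGround (.prod Q R)

/-- The bang function `!` (Definition 3.1): erases the `♯` modality. -/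
def bang : Ty → Ty
  | .tvar X => .tvar X
  | .bit => .bit
  | .lolli A B => .lolli A B
  | .arrow A B => .arrow A B
  | .prod A B => .prod (bang A) (bang B)
  | .sharp Q => bang Q
  | .sect A => .sect (bang A)
  | .all X A => .all X (bang A)

/-- Subtyping (Figure 4). -/
inductive Sub : Ty → Ty → Prop
  | refl (A : Ty) : Sub A A
  | trans {A B C} : Sub A B → Sub B C → Sub A C
  | lolli {A A' B B'} : Sub A' A → Sub B B' → Sub (.lolli A B) (.lolli A' B')
  | arrow {A A' B B'} : Sub A' A → Sub B B' → Sub (.arrow A B) (.arrow A' B')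
  | prod {A A' B B'} : Sub A A' → Sub B B' → Sub (.prod A B) (.prod A' B')
  | sect {A B} : Sub A B → Sub (.sect A) (.sect B)
  | all {A B} (X : ℕ) : Sub A B → Sub (.all X A) (.all X B)
  | sharpIntro {Q} : IsGround Q → Sub Q (.sharp Q)
  | sharpIdem {Q} : IsGround Q → Sub (.sharp (.sharp Q)) (.sharp Q)
  | sharpBang {Q} : IsGround Q → Sub Q (.sharp (bang Q))
  | sharpSect {Q} : IsGround Q → Sub (.sharp (.sect Q)) (.sect (.sharp Q))

/-- Polarity-aware type substitution `σ⁺/σ⁻` (`pol = true` is `σ⁺`). -/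
def tsubst (pol : Bool) (X : ℕ) (B : Ty) : Ty → Ty
  | .tvar Y => if Y = X then (if pol then B else bang B) else .tvar Y
  | .bit => .bit
  | .lolli A C => .lolli (tsubst pol X B A) (tsubst pol X B C)
  | .arrow A C => .arrow (tsubst false X B A) (tsubst true X B C)
  | .prod A C => .prod (tsubst pol X B A) (tsubst pol X B C)
  | .sharp Q => .sharp (tsubst pol X B Q)
  | .sect A => .sect (tsubst pol X B A)
  | .all Y A => if Y = X then .all Y A else .all Y (tsubst pol X B A)

/-- Free type variables of a type. -/
def ftvTy : Ty → Finset ℕ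
  | .tvar X => {X}
  | .bit => ∅
  | .lolli A B => ftvTy A ∪ ftvTy B
  | .arrow A B => ftvTy A ∪ ftvTy B
  | .prod A B => ftvTy A ∪ ftvTy B
  | .sharp A => ftvTy A
  | .sect A => ftvTy A
  | .all X A => ftvTy A \ {X}

/-! ### Typing environments -/

abbrev Ctx (T : Type) := ℕ → Option T

def Ctx.emp {T : Type} : Ctx T := fun _ => none
def Ctx.single {T : Type} (x : ℕ) (A : T) : Ctx T := fun y => if y = x then some A else none
def Ctx.union {T : Type} (Γ Δ : Ctx T) : Ctx T := fun x => (Γ x).orElse fun _ => Δ x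
def Ctx.Disj {T : Type} (Γ Δ : Ctx T) : Prop := ∀ x, Γ x = none ∨ Δ x = none
def Ctx.dom {T : Type} (Γ : Ctx T) : Set ℕ := {x | Γ x ≠ none}

/-- All four contexts pairwise disjoint. -/
def Ok4 {T : Type} (Γ Γ' Δ Δ' : Ctx T) : Prop :=
  Ctx.Disj Γ Γ' ∧ Ctx.Disj Γ Δ ∧ Ctx.Disj Γ Δ' ∧ Ctx.Disj Γ' Δ ∧ Ctx.Disj Γ' Δ' ∧ Ctx.Disj Δ Δ'

def ctxFtv (Γ : Ctx Ty) : Set ℕ := {X | ∃ x A, Γ x = some A ∧ X ∈ ftvTy A}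

/-! ### The PUNQ type system (Figure 5) -/

inductive TJ : Ctx Ty → Ctx Ty → Sup → Ty → Prop
  | weak {Γ Γ' Δ : Ctx Ty} {t : Sup} {A : Ty} :
      TJ Γ Δ t A → Ctx.Disj Γ Γ' → Ctx.Disj Γ' Δ →
      TJ (Ctx.union Γ Γ') Δ t A
  | contr {Γ Δ : Ctx Ty} {t : Sup} {A B : Ty} {x y : ℕ} :
      TJ (Ctx.union Γ (Ctx.union (Ctx.single x B) (Ctx.single y B))) Δ t A →
      x ≠ y → Γ x = none → Γ y = none → Δ x = none → Δ y = none →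
      TJ (Ctx.union Γ (Ctx.single x B)) Δ (rename t y x) A
  | equiv {Γ Δ : Ctx Ty} {t s : Sup} {A : Ty} :
      TJ Γ Δ t A → SupEq t s → TJ Γ Δ s A
  | sub {Γ Δ : Ctx Ty} {t : Sup} {A B : Ty} :
      TJ Γ Δ t A → Sub A B → TJ Γ Δ t B
  | ax (x : ℕ) (A : Ty) : TJ Ctx.emp (Ctx.single x A) (.term (.var x)) A
  | ket0 : TJ Ctx.emp Ctx.emp (.term .ket0) .bit
  | ket1 : TJ Ctx.emp Ctx.emp (.term .ket1) .bit
  | cond {Γ Δ Γ' Δ' : Ctx Ty} {t : Term} {s₁ s₂ : Sup} {A : Ty} :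
      TJ Γ Δ (.term t) .bit → TJ Γ' Δ' s₁ A → TJ Γ' Δ' s₂ A → Ok4 Γ Γ' Δ Δ' →
      TJ (Ctx.union Γ Γ') (Ctx.union Δ Δ') (.term (.cond t s₁ s₂)) A
  | condSharp {Γ Δ Γ' Δ' : Ctx Ty} {t : Term} {s₁ s₂ : Sup} {Q : Ty} :
      TJ Γ Δ (.term t) (.sharp .bit) → TJ Γ' Δ' s₁ Q → TJ Γ' Δ' s₂ Q →
      IsGround Q → OrthoOpen (Ctx.dom (Ctx.union Γ' Δ')) s₁ s₂ → Ok4 Γ Γ' Δ Δ' →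
      TJ (Ctx.union Γ Γ') (Ctx.union Δ Δ') (.term (.cond t s₁ s₂)) (.sharp Q)
  | sectI {Γ Δ : Ctx Ty} {t : Sup} {A : Ty} :
      TJ Ctx.emp (Ctx.union Γ Δ) t A → Ctx.Disj Γ Δ →
      TJ Γ (fun x => (Δ x).map Ty.sect) t (.sect A)
  | sectE {Γ Δ Γ' Δ' : Ctx Ty} {s t : Term} {x : ℕ} {A B : Ty} :
      TJ Γ Δ (.term s) (.sect B) →
      TJ Γ' (Ctx.union Δ' (Ctx.single x (.sect B))) (.term t) A →
      Ok4 Γ Γ' Δ Δ' → Γ' x = none → Δ' x = none →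
      TJ (Ctx.union Γ Γ') (Ctx.union Δ Δ') (substT t x (.term s)) A
  | allI {Γ Δ : Ctx Ty} {t : Sup} {A : Ty} {X : ℕ} :
      TJ Γ Δ t A → X ∉ ctxFtv Γ ∪ ctxFtv Δ → TJ Γ Δ t (.all X A)
  | allE {Γ Δ : Ctx Ty} {t : Sup} {A : Ty} {X : ℕ} (B : Ty) :
      TJ Γ Δ t (.all X A) → TJ Γ Δ t (tsubst true X B A)
  | sharpI {Γ Δ : Ctx Ty} {Q : Ty} (l : List (ℂ × Sup)) :
      IsGround Q → (∀ p ∈ l, TJ Γ Δ p.2 Q) →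
      l.Pairwise (fun p q => OrthoOpen (Ctx.dom (Ctx.union Γ Δ)) p.2 q.2) →
      (l.map fun p => Complex.normSq p.1).sum = 1 →
      TJ Γ Δ (mkSumS l) (.sharp Q)
  | lolliI {Γ Δ : Ctx Ty} {b : Sup} {A B : Ty} (x : ℕ) :
      TJ Γ (Ctx.union Δ (Ctx.single x A)) b B → Γ x = none → Δ x = none →
      TJ Γ Δ (.term (.lam x b)) (.lolli A B)
  | lolliE {Γ Δ Γ' Δ' : Ctx Ty} {t s : Term} {A B : Ty} :
      TJ Γ Δ (.term t) (.lolli A B) → TJ Γ' Δ' (.term s) A → Ok4 Γ Γ' Δ Δ' →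
      TJ (Ctx.union Γ Γ') (Ctx.union Δ Δ') (.term (.app t s)) B
  | arrowI {Γ Δ : Ctx Ty} {b : Sup} {A B : Ty} (x : ℕ) :
      TJ (Ctx.union Γ (Ctx.single x A)) Δ b B → Γ x = none → Δ x = none →
      TJ Γ Δ (.term (.lam x b)) (.arrow (bang A) B)
  | arrowE0 {Γ Δ : Ctx Ty} {t s : Term} {A B : Ty} :
      TJ Γ Δ (.term t) (.arrow A B) → TJ Ctx.emp Ctx.emp (.term s) A →
      TJ Γ Δ (.term (.app t s)) B
  | arrowE1 {Γ Δ : Ctx Ty} {t s : Term} {A B : Ty} (z : ℕ) (C : Ty) :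
      TJ Γ Δ (.term t) (.arrow A B) → TJ Ctx.emp (Ctx.single z C) (.term s) A →
      Γ z = none → Δ z = none →
      TJ (Ctx.union Γ (Ctx.single z C)) Δ (.term (.app t s)) B
  | prodI {Γ Δ Γ' Δ' : Ctx Ty} {t s : Term} {A B : Ty} :
      TJ Γ Δ (.term t) A → TJ Γ' Δ' (.term s) B → Ok4 Γ Γ' Δ Δ' →
      TJ (Ctx.union Γ Γ') (Ctx.union Δ Δ') (.term (.pair t s)) (.prod A B)
  | prodE {Γ Δ Γ' Δ' : Ctx Ty} {t : Term} {s : Sup} {A B C : Ty} (x y : ℕ) :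
      TJ Γ Δ (.term t) (.prod A B) →
      TJ Γ' (Ctx.union (Ctx.union Δ' (Ctx.single x A)) (Ctx.single y B)) s C →
      x ≠ y → Γ' x = none → Δ' x = none → Γ' y = none → Δ' y = none →
      Ok4 Γ Γ' Δ Δ' →
      TJ (Ctx.union Γ Γ') (Ctx.union Δ Δ') (.term (.lett x y t s)) C
  | prodESharp {Γ Δ Γ' Δ' : Ctx Ty} {t : Term} {s : Sup} {Q R S : Ty} (x y : ℕ) :
      TJ Γ Δ (.term t) (.sharp (.prod Q R)) →
      TJ Γ' (Ctx.union (Ctx.union Δ' (Ctx.single x (.sharp Q))) (Ctx.single y (.sharp R))) s S →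
      IsGround Q → IsGround R → IsGround S →
      x ≠ y → Γ' x = none → Δ' x = none → Γ' y = none → Δ' y = none →
      Ok4 Γ Γ' Δ Δ' →
      TJ (Ctx.union Γ Γ') (Ctx.union Δ Δ') (.term (.lett x y t s)) (.sharp S)

/-! ### Realizability semantics (Figure 6) -/

/-- Closed superpositions. -/
def ClosedS (s : Sup) : Prop := fvS s = ∅

/-- The unit sphere: closed values of norm 1. -/
def S1 : Set Sup := {v | Value v ∧ ClosedS v ∧ ‖inn v v‖ ^ 2 = 1}

/-- `t ⊩ S`: `t` reduces to some value in `S`. -/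
def Realizes (t : Sup) (S : Set Sup) : Prop := ∃ v ∈ S, StepStar t v

/-- Span: finite linear combinations (up to `≡`) of elements of `S`. -/
def spanS (S : Set Sup) : Set Sup :=
  {s | ∃ l : List (ℂ × Sup), (∀ p ∈ l, p.2 ∈ S) ∧ SupEq s (mkSumS l)}

/-- The basis values occurring with nonzero amplitude in a value. -/
def baseOf : Sup → Set Term
  | .term v => {v}
  | .zero => ∅
  | .smul α s => if α = 0 then ∅ else baseOf s
  | .add s t => baseOf s ∪ baseOf t

/-- `♭S`. -/
def flatS (S : Set Sup) : Set Term := ⋃ v ∈ S, baseOf v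

/-- The unitary semantics `⟦A⟧_τ` (Figure 6). -/
def sem : Ty → (ℕ → Set Sup) → Set Sup
  | .tvar X, τ => τ X
  | .bit, _ => {Sup.term .ket0, Sup.term .ket1}
  | .sharp A, τ => spanS (sem A τ) ∩ S1
  | .sect A, τ => sem A τ
  | .prod A B, τ => {s | ∃ v ∈ sem A τ, ∃ w ∈ sem B τ, s = pairS v w}
  | .lolli A B, τ =>
      {s | (∃ x b, s = .term (.lam x b)) ∧ ∀ v ∈ sem A τ, Realizes (appS s v) (sem B τ)}
  | .arrow A B, τ =>
      {s | (∃ x b, s = .term (.lam x b)) ∧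
        ∀ v ∈ flatS (sem A τ), Realizes (appS s (.term v)) (sem B τ)}
  | .all X A, τ => {s | ∀ R : Set Sup, R ⊆ S1 → s ∈ sem A (Function.update τ X R)}

/-- Types with no type variables and no universal quantifiers. -/
inductive SimpleTy : Ty → Prop
  | bit : SimpleTy .bit
  | lolli {A B} : SimpleTy A → SimpleTy B → SimpleTy (.lolli A B)
  | arrow {A B} : SimpleTy A → SimpleTy B → SimpleTy (.arrow A B)
  | prod {A B} : SimpleTy A → SimpleTy B → SimpleTy (.prod A B)
  | sharp {A} : SimpleTy A → SimpleTy (.sharp A)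
  | sect {A} : SimpleTy A → SimpleTy (.sect A)

/-! ### Validity of judgments (Section 5.1) -/

/-- Decomposition of a superposition into a linear combination of terms. -/
def decomp : Sup → List (ℂ × Term)
  | .term t => [(1, t)]
  | .zero => []
  | .smul α s => (decomp s).map fun p => (α * p.1, p.2)
  | .add s t => decomp s ++ decomp t

/-- Plain substitution of a single (basis-value) term. -/
def subst1 (t : Sup) (x : ℕ) (v : Term) : Sup :=
  msubS t fun y => if y = x then some v else none

/-- Linear-extension substitution `t⃗⟨u⃗/x⟩ = Σᵢ αᵢ · t⃗[vᵢ/x]`. -/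
def lsubst (t : Sup) (x : ℕ) (u : Sup) : Sup :=
  mkSumS ((decomp u).map fun p => (p.1, subst1 t x p.2))

/-- Apply a finite substitution (of closed values) by linear extension. -/
def applyVSubst (σ : List (ℕ × Sup)) (t : Sup) : Sup :=
  σ.foldl (fun t p => lsubst t p.1 p.2) t

/-- `σ ∈ ⟦Γ⟧_τ`: a substitution with domain `dom Γ` assigning to each variable a
closed value in the semantics of its type. -/
def SemSubst (τ : ℕ → Set Sup) (Γ : Ctx Ty) (σ : List (ℕ × Sup)) : Prop :=
  (σ.map Prod.fst).Nodup ∧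
  (∀ x, (Γ x).isSome ↔ x ∈ σ.map Prod.fst) ∧
  (∀ p ∈ σ, ∀ A, Γ p.1 = some A → p.2 ∈ sem A τ)

/-- A typing judgment `Γ;Δ ⊢ t⃗ : A` is valid. -/
def ValidJ (Γ Δ : Ctx Ty) (t : Sup) (A : Ty) : Prop :=
  Ctx.dom Δ ⊆ ↑(fvS t) ∧ (↑(fvS t) : Set ℕ) ⊆ Ctx.dom Γ ∪ Ctx.dom Δ ∧
  ∀ (τ : ℕ → Set Sup) (σ : List (ℕ × Sup)),
    (∀ X, τ X ⊆ S1) →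
    SemSubst τ (Ctx.union Γ Δ) σ →
    Realizes (applyVSubst σ t) (sem A τ)

/-! ### Qubit tuples, isometries, representation (Section 5.2) -/

/-- The type `𝔹ⁿ` of `n`-tuples of bits. -/
def bitsTy : ℕ → Ty
  | 0 => .bit
  | 1 => .bit
  | n + 2 => .prod .bit (bitsTy (n + 1))

def ketBit (b : Bool) : Term := if b then .ket1 else .ket0

/-- `|i⟩` as a right-nested `n`-tuple of bits (most significant bit first). -/
def ketN : ℕ → ℕ → Term
  | 0, _ => .ket0
  | 1, i => ketBit (i.testBit 0)
  | n + 2, i => .pair (ketBit (i.testBit (n + 1))) (ketN (n + 1) i)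

/-- The linear map `[[·]]` sending a value of type `♯(𝔹ⁿ)` to its coordinate vector. -/
noncomputable def lmap (n : ℕ) (v : Sup) : Fin (2 ^ n) → ℂ :=
  fun i => inn (.term (ketN n i.val)) v

noncomputable def cInner {m : ℕ} (u v : Fin m → ℂ) : ℂ :=
  ∑ i, (starRingEnd ℂ) (u i) * v i

/-- An operator is isometric if it preserves the inner product. -/
def IsIsometricOp {n k : ℕ} (F : (Fin n → ℂ) →ₗ[ℂ] (Fin k → ℂ)) : Prop :=
  ∀ u v, cInner (F u) (F v) = cInner u v

/-- The empty type-variable valuation. -/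
def emptyVal : ℕ → Set Sup := fun _ => ∅

/-- `t⃗` (of type `♯(𝔹ⁿ) ⊸ ♯(𝔹ᵏ)`) represents the operator `F`. -/
def Represents (n k : ℕ) (t : Sup)
    (F : (Fin (2 ^ n) → ℂ) →ₗ[ℂ] (Fin (2 ^ k) → ℂ)) : Prop :=
  ∀ v w : Sup, v ∈ sem (.sharp (bitsTy n)) emptyVal → w ∈ sem (.sharp (bitsTy k)) emptyVal →
    (StepStar (appS t v) w ↔ F (lmap n v) = lmap k w)

/-! ### DLAL_*: terms, reduction, typing (Section 6.1, Figure 8) -/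

inductive DTerm : Type
  | var : ℕ → DTerm
  | lam : ℕ → DTerm → DTerm
  | app : DTerm → DTerm → DTerm
  | star : DTerm
deriving DecidableEq

/-- Size of a DLAL_* term (number of symbols). -/
def dsize : DTerm → ℕ
  | .var _ => 1
  | .lam _ t => 1 + dsize t
  | .app t s => 1 + dsize t + dsize s
  | .star => 1

def dsubst : DTerm → ℕ → DTerm → DTerm
  | .var y, x, u => if y = x then u else .var y
  | .lam y b, x, u => if y = x then .lam y b else .lam y (dsubst b x u)
  | .app t s, x, u => .app (dsubst t x u) (dsubst s x u)
  | .star, _, _ => .star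

def drename (t : DTerm) (y x : ℕ) : DTerm := dsubst t y (.var x)

/-- Call-by-value values. -/
inductive DVal : DTerm → Prop
  | var (x : ℕ) : DVal (.var x)
  | lam (x : ℕ) (t : DTerm) : DVal (.lam x t)
  | star : DVal .star

/-- Call-by-value β-reduction; `*` never reduces. -/
inductive DStep : DTerm → DTerm → Prop
  | beta {x : ℕ} {t v : DTerm} : DVal v → DStep (.app (.lam x t) v) (dsubst t x v)
  | appL {t t' s : DTerm} : DStep t t' → DStep (.app t s) (.app t' s)
  | appR {v s s' : DTerm} : DVal v → DStep s s' → DStep (.app v s) (.app v s')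

def DNormal (t : DTerm) : Prop := ∀ s, ¬ DStep t s

/-- DLAL types. -/
inductive DTy : Type
  | tvar : ℕ → DTy
  | lolli : DTy → DTy → DTy
  | arrow : DTy → DTy → DTy
  | sect : DTy → DTy
  | all : ℕ → DTy → DTy
deriving DecidableEq

def dtysubst (X : ℕ) (B : DTy) : DTy → DTy
  | .tvar Y => if Y = X then B else .tvar Y
  | .lolli A C => .lolli (dtysubst X B A) (dtysubst X B C)
  | .arrow A C => .arrow (dtysubst X B A) (dtysubst X B C)
  | .sect A => .sect (dtysubst X B A)
  | .all Y A => if Y = X then .all Y A else .all Y (dtysubst X B A)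

def dftv : DTy → Finset ℕ
  | .tvar X => {X}
  | .lolli A B => dftv A ∪ dftv B
  | .arrow A B => dftv A ∪ dftv B
  | .sect A => dftv A
  | .all X A => dftv A \ {X}

def dctxFtv (Γ : Ctx DTy) : Set ℕ := {X | ∃ x A, Γ x = some A ∧ X ∈ dftv A}

/-- The DLAL_* type system (Figure 8, plus the rule for `*`). -/
inductive DJ : Ctx DTy → Ctx DTy → DTerm → DTy → Prop
  | weak {Γ Γ' Δ Δ' : Ctx DTy} {t : DTerm} {A : DTy} :
      DJ Γ Δ t A → Ok4 Γ Γ' Δ Δ' → DJ (Ctx.union Γ Γ') (Ctx.union Δ Δ') t A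
  | contr {Γ Δ : Ctx DTy} {t : DTerm} {A B : DTy} {x y : ℕ} :
      DJ (Ctx.union Γ (Ctx.union (Ctx.single x B) (Ctx.single y B))) Δ t A →
      x ≠ y → Γ x = none → Γ y = none → Δ x = none → Δ y = none →
      DJ (Ctx.union Γ (Ctx.single x B)) Δ (drename t y x) A
  | id (x : ℕ) (A : DTy) : DJ Ctx.emp (Ctx.single x A) (.var x) A
  | lolliI {Γ Δ : Ctx DTy} {b : DTerm} {A B : DTy} (x : ℕ) :
      DJ Γ (Ctx.union Δ (Ctx.single x A)) b B → Γ x = none → Δ x = none →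
      DJ Γ Δ (.lam x b) (.lolli A B)
  | lolliE {Γ Δ Γ' Δ' : Ctx DTy} {t s : DTerm} {A B : DTy} :
      DJ Γ Δ t (.lolli A B) → DJ Γ' Δ' s A → Ok4 Γ Γ' Δ Δ' →
      DJ (Ctx.union Γ Γ') (Ctx.union Δ Δ') (.app t s) B
  | arrowI {Γ Δ : Ctx DTy} {b : DTerm} {A B : DTy} (x : ℕ) :
      DJ (Ctx.union Γ (Ctx.single x A)) Δ b B → Γ x = none → Δ x = none →
      DJ Γ Δ (.lam x b) (.arrow A B)
  | arrowE0 {Γ Δ : Ctx DTy} {t s : DTerm} {A B : DTy} :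
      DJ Γ Δ t (.arrow A B) → DJ Ctx.emp Ctx.emp s A →
      DJ Γ Δ (.app t s) B
  | arrowE1 {Γ Δ : Ctx DTy} {t s : DTerm} {A B : DTy} (z : ℕ) (C : DTy) :
      DJ Γ Δ t (.arrow A B) → DJ Ctx.emp (Ctx.single z C) s A →
      Γ z = none → Δ z = none →
      DJ (Ctx.union Γ (Ctx.single z C)) Δ (.app t s) B
  | sectI {Γ Δ : Ctx DTy} {t : DTerm} {A : DTy} :
      DJ Ctx.emp (Ctx.union Γ Δ) t A → Ctx.Disj Γ Δ →
      DJ Γ (fun x => (Δ x).map DTy.sect) t (.sect A)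
  | sectE {Γ Δ Γ' Δ' : Ctx DTy} {s t : DTerm} {x : ℕ} {A B : DTy} :
      DJ Γ Δ s (.sect B) →
      DJ Γ' (Ctx.union Δ' (Ctx.single x (.sect B))) t A →
      Ok4 Γ Γ' Δ Δ' → Γ' x = none → Δ' x = none →
      DJ (Ctx.union Γ Γ') (Ctx.union Δ Δ') (dsubst t x s) A
  | allI {Γ Δ : Ctx DTy} {t : DTerm} {A : DTy} {X : ℕ} :
      DJ Γ Δ t A → X ∉ dctxFtv Γ ∪ dctxFtv Δ → DJ Γ Δ t (.all X A)
  | allE {Γ Δ : Ctx DTy} {t : DTerm} {A : DTy} {X : ℕ} (B : DTy) :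
      DJ Γ Δ t (.all X A) → DJ Γ Δ t (dtysubst X B A)
  | star (X : ℕ) : DJ Ctx.emp Ctx.emp .star (.all X (.tvar X))

/-! ### Reduction of sets of DLAL_* terms -/

/-- One set-reduction step: every term takes one reduction step (normal terms stay). -/
def DSetStep (S T : Set DTerm) : Prop :=
  T = {t | ∃ s ∈ S, DStep s t ∨ (DNormal s ∧ t = s)}

inductive DSetStepN : ℕ → Set DTerm → Set DTerm → Prop
  | zero (S : Set DTerm) : DSetStepN 0 S S
  | succ {n : ℕ} {S T U : Set DTerm} :
      DSetStep S T → DSetStepN n T U → DSetStepN (n + 1) S U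

/-- Size of a set of DLAL_* terms: the maximal size of its elements. -/
noncomputable def ssize (S : Set DTerm) : ℕ := sSup (dsize '' S)

/-! ### Translation of types `(·)⋆ : 𝕋 → 𝕊` (Figure 10) -/

def maxTv : Ty → ℕ
  | .tvar X => X
  | .bit => 0
  | .lolli A B => max (maxTv A) (maxTv B)
  | .arrow A B => max (maxTv A) (maxTv B)
  | .prod A B => max (maxTv A) (maxTv B)
  | .sharp A => maxTv A
  | .sect A => maxTv A
  | .all X A => max X (maxTv A)

/-- `(·)⋆`: translation of PUNQ types to DLAL types. -/
def tstar : Ty → DTy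
  | .tvar X => .tvar X
  | .bit => .all 0 (.lolli (.tvar 0) (.lolli (.tvar 0) (.tvar 0)))
  | .lolli A B => .lolli (tstar A) (tstar B)
  | .arrow A B => .arrow (tstar A) (tstar B)
  | .prod A B =>
      let X := max (maxTv A) (maxTv B) + 1
      .all X (.lolli (.lolli (tstar A) (.lolli (tstar B) (.tvar X))) (.tvar X))
  | .sharp Q => tstar Q
  | .sect A => .sect (tstar A)
  | .all X A => .all X (tstar A)

/-- Pointwise translation of typing contexts. -/
def starCtx (Γ : Ctx Ty) : Ctx DTy := fun x => (Γ x).map tstar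

/-! ### Translation of terms `⌊·⌋ : PUNQ → 𝒫(DLAL_*)` (Figure 9) -/

def sApp (S T : Set DTerm) : Set DTerm := {u | ∃ s ∈ S, ∃ t ∈ T, u = .app s t}

def lamList : List ℕ → DTerm → DTerm
  | [], t => t
  | x :: xs, t => .lam x (lamList xs t)

def appList : DTerm → List ℕ → DTerm
  | t, [] => t
  | t, x :: xs => appList (.app t (.var x)) xs

/-- Apply every element of `S` to elements of `T`, `k` times. -/
def appIter : ℕ → Set DTerm → Set DTerm → Set DTerm
  | 0, S, _ => S
  | k + 1, S, T => sApp (appIter k S T) T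

def maxVarD : DTerm → ℕ
  | .var y => y
  | .lam y t => max y (maxVarD t)
  | .app t s => max (maxVarD t) (maxVarD s)
  | .star => 0

/-- Number of free occurrences of `x`. -/
def countOccD (x : ℕ) : DTerm → ℕ
  | .var y => if y = x then 1 else 0
  | .lam y t => if y = x then 0 else countOccD x t
  | .app t s => countOccD x t + countOccD x s
  | .star => 0

/-- Replace the successive free occurrences of `x` by `base + 0, base + 1, …`,
threading a counter. -/
def dlin (x base : ℕ) : DTerm → ℕ → DTerm × ℕ
  | .var y, c => if y = x then (.var (base + c), c + 1) else (.var y, c)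
  | .lam y t, c =>
      if y = x then (.lam y t, c)
      else
        let p := dlin x base t c
        (.lam y p.1, p.2)
  | .app t s, c =>
      let p := dlin x base t c
      let q := dlin x base s p.2
      (.app p.1 q.1, q.2)
  | .star, c => (.star, c)

/-- Linearization `λx₁…x_k.(s with the occurrences of x split)`. -/
def linOne (x : ℕ) (s : DTerm) : DTerm :=
  lamList ((List.range (countOccD x s)).map fun i => maxVarD s + 1 + i)
    (dlin x (maxVarD s + 1) s 0).1

def linSet (x : ℕ) (S : Set DTerm) : Set DTerm := linOne x '' S

/-- Church pairing `λz.(z s t)` with `z` fresh. -/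
def churchPair (s t : DTerm) : DTerm :=
  let z := max (maxVarD s) (maxVarD t) + 1
  .lam z (.app (.app (.var z) s) t)

/-- The translation `⌊·⌋` of PUNQ superpositions into sets of DLAL_* terms
(Figure 9), presented relationally: the list `xs` of λ-closed variables in the
conditional case and the repetition count `k = η(t₁)` in the application case
are determined by the (implicit) typing derivation and are existentially chosen
here. -/
inductive Tr : Sup → Set DTerm → Prop
  | zero : Tr .zero {DTerm.star}
  | var (x : ℕ) : Tr (.term (.var x)) {DTerm.var x}
  | ket0 : Tr (.term .ket0) {DTerm.lam 0 (.lam 1 (.var 0))}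
  | ket1 : Tr (.term .ket1) {DTerm.lam 0 (.lam 1 (.var 1))}
  | smul0 {t : Sup} : Tr (.smul 0 t) {DTerm.star}
  | smul {α : ℂ} {t : Sup} {S : Set DTerm} :
      α ≠ 0 → Tr t S → Tr (.smul α t) S
  | add {t r : Sup} {S T : Set DTerm} :
      Tr t S → Tr r T → Tr (.add t r) (S ∪ T)
  | pair {t₁ t₂ : Term} {S T : Set DTerm} :
      Tr (.term t₁) S → Tr (.term t₂) T →
      Tr (.term (.pair t₁ t₂)) {u | ∃ s ∈ S, ∃ t ∈ T, u = churchPair s t}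
  | lett {x y : ℕ} {t₁ : Term} {b : Sup} {S T : Set DTerm} :
      Tr (.term t₁) S → Tr b T →
      Tr (.term (.lett x y t₁ b)) (sApp S ((fun u => DTerm.lam x (.lam y u)) '' T))
  | cond {t : Term} {s₁ s₂ : Sup} {S S₁ S₂ : Set DTerm} (xs : List ℕ) :
      Tr (.term t) S → Tr s₁ S₁ → Tr s₂ S₂ →
      Tr (.term (.cond t s₁ s₂))
        ((fun u => appList u xs) '' sApp (sApp S (lamList xs '' S₁)) (lamList xs '' S₂))
  | app {t₁ t₂ : Term} {S T : Set DTerm} (k : ℕ) :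
      Tr (.term t₁) S → Tr (.term t₂) T →
      Tr (.term (.app t₁ t₂)) (appIter k S T)
  | lam {x : ℕ} {b : Sup} {B : Set DTerm} :
      Tr b B → Tr (.term (.lam x b)) (linSet x B)

/-!
The only non-structural clause of `(·)⋆` is the product, whose Church encoding binds the
fresh variable `maxTv A ⊔ maxTv B + 1`. So alongside `A⋆ = B⋆` one needs that subtyping
preserves `maxTv`; both follow by induction on `A ≤ B`, the rule `Q ≤ ♯!(Q)` being covered by
`!` preserving `maxTv` and `(·)⋆` on every type.
-/

theorem maxTv_bang (A : Ty) : maxTv (bang A) = maxTv A := by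
  induction A <;> simp_all [bang, maxTv]

theorem tstar_bang (A : Ty) : tstar (bang A) = tstar A := by
  induction A <;> simp_all [bang, tstar, maxTv_bang]

theorem Sub.maxTv_eq {A B : Ty} (h : Sub A B) : maxTv A = maxTv B := by
  induction h <;> simp_all [maxTv, maxTv_bang]

/-- **Lemma 6.4**: the translation of PUNQ types into DLAL types is invariant under
subtyping: if `A ≤ B` then `A⋆ = B⋆`. -/
theorem tstar_subtype {A B : Ty} (h : Sub A B) : tstar A = tstar B := by
  induction h with
  | sharpBang => exact (tstar_bang _).symm
  | prod h₁ h₂ ih₁ ih₂ => simp [tstar, h₁.maxTv_eq, h₂.maxTv_eq, ih₁, ih₂]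
  | _ => simp_all [tstar]

end PUNQFormal
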